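/- Let n ≥ 4 and let N be an integer with 6 < N ≤ n + 3. A code C ⊆ {0,1}^n satisfies |I_2(x) ∩ I_2(y)| < N for all distinct x, y ∈ C if and only if it satisfies |I_1(x) ∩ I_1(y)| = 0 for all distinct x, y ∈ C. -/

import Mathlib

/-!
The equivalence holds pair by pair. Classify the common supersequences `z = a :: z'` of `x`
and `y` by their first letter `a`: they correspond to the common supersequences `z'` of the
words obtained by deleting a leading `a` from `x` and from `y`. For binary words this gives a
two-term recursion for the number of common supersequences of a given length.

If `x ≠ y` of length `n` have a common supersequence `v` of length `n + 1`, all `n + 3`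
supersequences of `v` of length `n + 2` are common to `x` and `y`. If they have none, the
recursion bounds the common supersequences of length `n + 2` by `3 + 3`: two words of lengths
`m + 1` and `m`, the shorter not a subsequence of the longer, have at most `2 + 1` common
supersequences of length `m + 2`, and two distinct words of length `m` at most `1 + 1` of
length `m + 1`.
-/

open List

/-- The `t`-insertion ball of a binary word `x`: all words of length `|x| + t`
containing `x` as a (not necessarily contiguous) subsequence. -/
def insBall (t : ℕ) (x : List Bool) : Set (List Bool) :=
  {z | z.length = x.length + t ∧ x.Sublist z}

/-- Componentwise complement of a binary word. -/
def bcompl (w : List Bool) : List Bool := w.map (fun c => !c)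

/-- `wpow p i` is the concatenation of `i` copies of the word `p`. -/
def wpow (p : List Bool) (i : ℕ) : List Bool := (List.replicate i p).flatten

/-- `w` is an alternating word of length at least 1:
`w = (a ā)^i` with `i ≥ 1`, or `w = (a ā)^j a` with `j ≥ 0`. -/
def IsAlt (w : List Bool) : Prop :=
  ∃ a : Bool, (∃ i, 1 ≤ i ∧ w = wpow [a, !a] i) ∨ (∃ j, w = wpow [a, !a] j ++ [a])

/-- Type-A confusability: `x = u w v`, `y = u w̄ v` for an alternating block `w`. -/
def TypeA (x y : List Bool) : Prop :=
  ∃ u v w : List Bool, IsAlt w ∧ x = u ++ w ++ v ∧ y = u ++ bcompl w ++ v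

/-- Type-B confusability: `{x, y} = {u a ā v b w, u ā v b b̄ w}`. -/
def TypeB (x y : List Bool) : Prop :=
  ∃ (u v w : List Bool) (a b : Bool),
    ({x, y} : Set (List Bool)) =
      {u ++ [a, !a] ++ v ++ [b] ++ w, u ++ [!a] ++ v ++ [b, !b] ++ w}

/-- `p` is a period of `s` : `s_i = s_{i+p}` whenever both indices are in range. -/
def IsPeriodOf (p : ℕ) (s : List Bool) : Prop :=
  ∀ i, i + p < s.length → s.getD i false = s.getD (i + p) false

/-- The (smallest) period of `s` is at most `ℓ`. -/
def PeriodLe (s : List Bool) (ℓ : ℕ) : Prop :=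
  ∃ p, 1 ≤ p ∧ p ≤ ℓ ∧ IsPeriodOf p s

/-- `R(n, ℓ, t)`: binary words of length `n` in which every contiguous subword
of period at most `ℓ` has length at most `t`. -/
def Rset (n ℓ t : ℕ) : Set (List Bool) :=
  {x | x.length = n ∧ ∀ s : List Bool, s <:+: x → PeriodLe s ℓ → s.length ≤ t}

/-- `Inv(x)`: the number of pairs `i < j` with `x_i > x_j` (i.e. `x_i = 1`, `x_j = 0`). -/
def invNum (x : List Bool) : ℕ :=
  ((Finset.range x.length ×ˢ Finset.range x.length).filter
    (fun q => q.1 < q.2 ∧ x.getD q.1 false = true ∧ x.getD q.2 false = false)).card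

def List.dropHead {α : Type*} [DecidableEq α] (a : α) : List α → List α
  | [] => []
  | b :: x => if b = a then x else b :: x

section dropHead

variable {α : Type*} [DecidableEq α] {a b : α} {x : List α}

@[simp]
lemma List.dropHead_nil : ([] : List α).dropHead a = [] := rfl

@[simp]
lemma List.dropHead_cons_self : (a :: x).dropHead a = x := by
  simp [List.dropHead]

lemma List.dropHead_cons_of_ne (h : b ≠ a) : (b :: x).dropHead a = b :: x := by
  simp [List.dropHead, h]

lemma List.sublist_cons_iff_dropHead {z : List α} : x <+ a :: z ↔ x.dropHead a <+ z := by
  cases x with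
  | nil => simp
  | cons b x =>
    by_cases h : b = a
    · subst h
      simp
    · rw [List.dropHead_cons_of_ne h, List.sublist_cons_iff]
      simp [h]

end dropHead

def commonSupersequences (k : ℕ) (x y : List Bool) : Set (List Bool) :=
  {z | z.length = k ∧ x <+ z ∧ y <+ z}

section commonSupersequences

variable {k : ℕ} {x y : List Bool}

lemma commonSupersequences_comm :
    commonSupersequences k x y = commonSupersequences k y x := by
  ext z
  exact and_congr_right fun _ => and_comm

lemma commonSupersequences_finite : (commonSupersequences k x y).Finite :=
  (List.finite_length_eq Bool k).subset fun _ hz => hz.1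

lemma commonSupersequences_anti {x' y' : List Bool} (hx : x <+ x') (hy : y <+ y') :
    commonSupersequences k x' y' ⊆ commonSupersequences k x y :=
  fun _ ⟨hz, hxz, hyz⟩ => ⟨hz, hx.trans hxz, hy.trans hyz⟩

lemma insBall_inter_insBall {n t : ℕ} (hx : x.length = n) (hy : y.length = n) :
    insBall t x ∩ insBall t y = commonSupersequences (n + t) x y := by
  ext z
  simp only [insBall, commonSupersequences, Set.mem_inter_iff, Set.mem_ofPred_eq, hx, hy]
  tauto

lemma commonSupersequences_of_length_eq (hx : x.length = k) :
    commonSupersequences k x y = if y <+ x then {x} else ∅ := by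
  ext z
  constructor
  · rintro ⟨hz, hxz, hyz⟩
    obtain rfl : z = x := (hxz.eq_of_length (hx.trans hz.symm)).symm
    simp [hyz]
  · split_ifs with h
    · rintro rfl
      exact ⟨hx, List.Sublist.refl _, h⟩
    · rintro ⟨⟩

lemma ncard_commonSupersequences_le_one (hx : x.length = k) :
    (commonSupersequences k x y).ncard ≤ 1 := by
  rw [commonSupersequences_of_length_eq hx]
  split_ifs <;> simp

lemma commonSupersequences_eq_empty (hx : x.length = k) (hyx : ¬ y <+ x) :
    commonSupersequences k x y = ∅ := by
  rw [commonSupersequences_of_length_eq hx, if_neg hyx]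

lemma commonSupersequences_succ (c : Bool) :
    commonSupersequences (k + 1) x y =
      (c :: ·) '' commonSupersequences k (x.dropHead c) (y.dropHead c) ∪
        ((!c) :: ·) '' commonSupersequences k (x.dropHead !c) (y.dropHead !c) := by
  ext z
  rcases z with _ | ⟨a, z⟩
  · simp [commonSupersequences]
  · rcases Bool.eq_or_eq_not a c with rfl | rfl <;>
      simp [commonSupersequences, List.sublist_cons_iff_dropHead]

lemma ncard_commonSupersequences_succ (c : Bool) :
    (commonSupersequences (k + 1) x y).ncard =
      (commonSupersequences k (x.dropHead c) (y.dropHead c)).ncard +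
        (commonSupersequences k (x.dropHead !c) (y.dropHead !c)).ncard := by
  have hdisj : Disjoint ((c :: ·) '' commonSupersequences k (x.dropHead c) (y.dropHead c))
      (((!c) :: ·) '' commonSupersequences k (x.dropHead !c) (y.dropHead !c)) := by
    rw [Set.disjoint_left]
    rintro _ ⟨_, -, rfl⟩ ⟨_, -, h⟩
    exact Bool.not_ne_self c (List.cons_eq_cons.1 h).1
  rw [commonSupersequences_succ c, Set.ncard_union_eq hdisj (commonSupersequences_finite.image _)
    (commonSupersequences_finite.image _), Set.ncard_image_of_injective _ List.cons_injective,
    Set.ncard_image_of_injective _ List.cons_injective]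

end commonSupersequences

lemma ncard_commonSupersequences_self (v : List Bool) :
    (commonSupersequences (v.length + 1) v v).ncard = v.length + 2 := by
  induction v with
  | nil =>
    rw [ncard_commonSupersequences_succ true, List.dropHead_nil, List.dropHead_nil,
      commonSupersequences_of_length_eq rfl, if_pos (List.Sublist.refl _), Set.ncard_singleton]
    rfl
  | cons c v ih =>
    rw [List.length_cons, ncard_commonSupersequences_succ c, List.dropHead_cons_self,
      List.dropHead_cons_of_ne (Bool.self_ne_not c), ih,
      commonSupersequences_of_length_eq (List.length_cons ..), if_pos (List.Sublist.refl _),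
      Set.ncard_singleton]

lemma add_three_le_ncard_commonSupersequences {n : ℕ} {x y v : List Bool}
    (hv : v ∈ commonSupersequences (n + 1) x y) :
    n + 3 ≤ (commonSupersequences (n + 2) x y).ncard := by
  obtain ⟨hlen, hxv, hyv⟩ := hv
  calc n + 3 = (commonSupersequences (v.length + 1) v v).ncard := by
        rw [ncard_commonSupersequences_self, hlen]
    _ ≤ (commonSupersequences (n + 2) x y).ncard := by
        rw [hlen]
        exact Set.ncard_le_ncard (commonSupersequences_anti hxv hyv) commonSupersequences_finite

lemma ncard_commonSupersequences_le_two {x y : List Bool} (hxy : x.length = y.length)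
    (hne : x ≠ y) : (commonSupersequences (x.length + 1) x y).ncard ≤ 2 := by
  induction x generalizing y with
  | nil => exact absurd (List.length_eq_zero_iff.1 hxy.symm).symm hne
  | cons c x ih =>
    obtain _ | ⟨d, y⟩ := y
    · simp at hxy
    rw [List.length_cons, ncard_commonSupersequences_succ c, List.dropHead_cons_self,
      List.dropHead_cons_of_ne (Bool.self_ne_not c)]
    rcases Bool.eq_or_eq_not d c with rfl | rfl
    · rw [List.dropHead_cons_self, List.dropHead_cons_of_ne (Bool.self_ne_not d),
        commonSupersequences_eq_empty (List.length_cons ..)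
          fun h => hne (h.eq_of_length hxy.symm).symm, Set.ncard_empty, add_zero]
      exact ih (by simpa using hxy) fun h => hne (h ▸ rfl)
    · rw [List.dropHead_cons_of_ne (Bool.not_ne_self c), List.dropHead_cons_self,
        commonSupersequences_comm (x := x)]
      have h₁ : (commonSupersequences (x.length + 1) ((!c) :: y) x).ncard ≤ 1 :=
        ncard_commonSupersequences_le_one hxy.symm
      have h₂ : (commonSupersequences (x.length + 1) (c :: x) y).ncard ≤ 1 :=
        ncard_commonSupersequences_le_one rfl
      omega

lemma ncard_commonSupersequences_le_three {y w : List Bool} (hlen : y.length = w.length + 1)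
    (hwy : ¬ w <+ y) : (commonSupersequences (y.length + 1) y w).ncard ≤ 3 := by
  induction y generalizing w with
  | nil => simp at hlen
  | cons d y ih =>
    obtain _ | ⟨e, w⟩ := w
    · exact absurd (List.nil_sublist _) hwy
    rw [List.length_cons, ncard_commonSupersequences_succ d, List.dropHead_cons_self,
      List.dropHead_cons_of_ne (Bool.self_ne_not d)]
    rcases Bool.eq_or_eq_not e d with rfl | rfl
    · rw [List.dropHead_cons_self, List.dropHead_cons_of_ne (Bool.self_ne_not e),
        commonSupersequences_eq_empty (List.length_cons ..) hwy, Set.ncard_empty, add_zero]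
      exact ih (by simpa using hlen) fun h => hwy (List.cons_sublist_cons.2 h)
    · rw [List.dropHead_cons_of_ne (Bool.not_ne_self d), List.dropHead_cons_self]
      have h₁ := ncard_commonSupersequences_le_two (x := y) (y := (!d) :: w) (by simpa using hlen)
        fun h => hwy (h ▸ List.sublist_cons_self d y)
      have h₂ := ncard_commonSupersequences_le_one (x := d :: y) (y := w) (List.length_cons ..)
      omega

lemma ncard_commonSupersequences_le_six {x y : List Bool} (hxy : x.length = y.length)
    (hne : x ≠ y) (h : commonSupersequences (x.length + 1) x y = ∅) :
    (commonSupersequences (x.length + 2) x y).ncard ≤ 6 := by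
  induction x generalizing y with
  | nil => exact absurd (List.length_eq_zero_iff.1 hxy.symm).symm hne
  | cons c x ih =>
    obtain _ | ⟨d, y⟩ := y
    · simp at hxy
    replace hxy : x.length = y.length := by simpa using hxy
    replace h : commonSupersequences (x.length + 2) (c :: x) (d :: y) = ∅ := h
    rw [List.length_cons, ncard_commonSupersequences_succ c, List.dropHead_cons_self,
      List.dropHead_cons_of_ne (Bool.self_ne_not c)]
    rcases Bool.eq_or_eq_not d c with rfl | rfl
    · rw [List.dropHead_cons_self, List.dropHead_cons_of_ne (Bool.self_ne_not d), h,
        Set.ncard_empty, add_zero]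
      rw [commonSupersequences_succ d, Set.union_empty_iff, List.dropHead_cons_self,
        List.dropHead_cons_self, Set.image_eq_empty] at h
      exact ih hxy (fun h => hne (h ▸ rfl)) h.1
    · have hnotMem := Set.eq_empty_iff_forall_notMem.1 h
      rw [List.dropHead_cons_of_ne (Bool.not_ne_self c), List.dropHead_cons_self,
        commonSupersequences_comm (x := x)]
      have h₁ : (commonSupersequences (x.length + 2) ((!c) :: y) x).ncard ≤ 3 := by
        rw [hxy]
        exact ncard_commonSupersequences_le_three (by simp [hxy]) fun hx => hnotMem (c :: (!c) :: y)
          ⟨by simp [hxy], List.cons_sublist_cons.2 hx, List.sublist_cons_self _ _⟩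
      have h₂ : (commonSupersequences (x.length + 2) (c :: x) y).ncard ≤ 3 :=
        ncard_commonSupersequences_le_three (by simp [hxy]) fun hy => hnotMem ((!c) :: c :: x)
          ⟨by simp, List.sublist_cons_self _ _, List.cons_sublist_cons.2 hy⟩
      omega

theorem stmt8_general (n N : ℕ) (hN1 : 6 < N) (hN2 : N ≤ n + 3)
    (C : Set (List Bool)) (hC : ∀ x ∈ C, x.length = n) :
    (∀ x ∈ C, ∀ y ∈ C, x ≠ y → (insBall 2 x ∩ insBall 2 y).ncard < N) ↔
    (∀ x ∈ C, ∀ y ∈ C, x ≠ y → (insBall 1 x ∩ insBall 1 y).ncard = 0) := by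
  refine forall₂_congr fun x hx => forall₂_congr fun y hy => forall_congr' fun hne => ?_
  rw [insBall_inter_insBall (hC x hx) (hC y hy), insBall_inter_insBall (hC x hx) (hC y hy),
    Set.ncard_eq_zero commonSupersequences_finite]
  constructor
  · intro hlt
    refine Set.eq_empty_iff_forall_notMem.2 fun v hv => ?_
    have := add_three_le_ncard_commonSupersequences hv
    omega
  · intro hempty
    have := ncard_commonSupersequences_le_six ((hC x hx).trans (hC y hy).symm) hne
      (by rwa [hC x hx])
    rw [hC x hx] at this
    omega

theorem stmt8 (n N : ℕ) (hn : 4 ≤ n) (hN1 : 6 < N) (hN2 : N ≤ n + 3)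
    (C : Set (List Bool)) (hC : ∀ x ∈ C, x.length = n) :
    (∀ x ∈ C, ∀ y ∈ C, x ≠ y → (insBall 2 x ∩ insBall 2 y).ncard < N) ↔
    (∀ x ∈ C, ∀ y ∈ C, x ≠ y → (insBall 1 x ∩ insBall 1 y).ncard = 0) :=
  stmt8_general n N hN1 hN2 C hC
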